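/- arXiv:1111.4442 — 4 statements merged into one kernel-verified Lean document; each statement's English description precedes it below -/
import Mathlib

section
/- For every natural number t ≥ 1, the forest consisting of the disjoint union of stars K_{2^j,1} for j = 0, 1, ..., t−1 has exactly 2^(2^t) − 1 independent sets, and has 2^t + t − 1 vertices. -/
/-- `s` is an independent set of vertices in `G`. -/
def IsIndep {V : Type*} (G : SimpleGraph V) (s : Finset V) : Prop :=
  ∀ u ∈ s, ∀ v ∈ s, ¬ G.Adj u v

/-- `s` is a maximal independent set in `G`. -/
def IsMaxIndep {V : Type*} (G : SimpleGraph V) (s : Finset V) : Prop :=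
  IsIndep G s ∧ ∀ t : Finset V, IsIndep G t → s ⊆ t → s = t

/-- `ι G`: the number of independent sets of `G` (including `∅`). -/
noncomputable def iota {V : Type*} [Fintype V] (G : SimpleGraph V) : ℕ :=
  Nat.card {s : Finset V // IsIndep G s}

/-- `ι_m G`: the number of maximal independent sets of `G`. -/
noncomputable def iotaM {V : Type*} [Fintype V] (G : SimpleGraph V) : ℕ :=
  Nat.card {s : Finset V // IsMaxIndep G s}

/-- `(L, R)` is a bipartition of `G`. -/
def IsBipartition {V : Type*} (G : SimpleGraph V) (L R : Finset V) : Prop :=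
  Disjoint L R ∧ (∀ v : V, v ∈ L ∨ v ∈ R) ∧
    ∀ u v : V, G.Adj u v → (u ∈ L ∧ v ∈ R) ∨ (u ∈ R ∧ v ∈ L)

/-- `G` is bipartite. -/
def IsBipartite {V : Type*} (G : SimpleGraph V) : Prop :=
  ∃ L R : Finset V, IsBipartition G L R

/-- `G` has no isolated vertices. -/
def NoIsolated {V : Type*} (G : SimpleGraph V) : Prop :=
  ∀ v : V, ∃ u : V, G.Adj v u

/-!
Independent sets of a graph with no edges between the fibres of `Σ i, V i` are exactly families of
independent sets of the fibres, so `ι` is multiplicative over components. An independent set of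
the star `K_{n,1}` is either the centre alone or a set of leaves, giving `2 ^ n + 1`. Hence
`ι = ∏_{j<t} (2 ^ 2 ^ j + 1)`, the product of the first `t` Fermat numbers, which is
`2 ^ 2 ^ t - 1`.
-/

open Finset

theorem iota_sigma_eq_prod {ι : Type*} [Fintype ι] {V : ι → Type*} [∀ i, Fintype (V i)]
    (F : SimpleGraph (Σ i, V i)) (hF : ∀ x y, F.Adj x y → x.1 = y.1) :
    iota F = ∏ i, iota (F.comap (Sigma.mk i)) := by
  classical
  let fibres : Finset (Σ i, V i) ≃ ∀ i, Finset (V i) :=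
    { toFun := fun s i => s.preimage (Sigma.mk i) sigma_mk_injective.injOn
      invFun := fun f => univ.sigma f
      left_inv := fun s => s.sigma_preimage_mk_of_subset (subset_univ _)
      right_inv := fun f => by ext; simp }
  have isIndep_iff : ∀ s, IsIndep F s ↔ ∀ i, IsIndep (F.comap (Sigma.mk i)) (fibres s i) := by
    refine fun s => ⟨fun hs i a ha b hb => hs _ (by simpa [fibres] using ha) _
      (by simpa [fibres] using hb), fun hs u hu v hv huv => ?_⟩
    obtain ⟨i, a⟩ := u
    obtain ⟨j, b⟩ := v
    obtain rfl : i = j := hF _ _ huv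
    exact hs i a (by simpa [fibres] using hu) b (by simpa [fibres] using hv) huv
  rw [iota, Nat.card_congr ((fibres.subtypeEquiv isIndep_iff).trans Equiv.subtypePiEquivPi),
    Nat.card_pi]
  rfl

theorem isIndep_star_iff {α : Type*} (G : SimpleGraph (Option α))
    (hG : ∀ x y, G.Adj x y ↔ (x = none ∧ y ≠ none) ∨ (y = none ∧ x ≠ none))
    (s : Finset (Option α)) : IsIndep G s ↔ none ∉ s ∨ s = {none} := by
  constructor
  · refine fun hs => or_iff_not_imp_left.2 fun hnone => ?_
    rw [not_not] at hnone
    refine eq_singleton_iff_unique_mem.2 ⟨hnone, fun x hx => ?_⟩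
    by_contra hx_some
    exact hs _ hnone _ hx ((hG _ _).2 (Or.inl ⟨rfl, hx_some⟩))
  · rintro (hs | rfl) u hu v hv huv
    · rcases (hG u v).1 huv with ⟨rfl, -⟩ | ⟨rfl, -⟩ <;> contradiction
    · rw [mem_singleton] at hu hv
      subst hu hv
      exact huv.ne rfl

theorem iota_star {α : Type*} [Fintype α] (G : SimpleGraph (Option α))
    (hG : ∀ x y, G.Adj x y ↔ (x = none ∧ y ≠ none) ∨ (y = none ∧ x ≠ none)) :
    iota G = 2 ^ Fintype.card α + 1 := by
  classical
  let e : {s : Finset (Option α) // none ∉ s ∨ s = {none}} ≃ Option (Finset α) :=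
    { toFun := fun s => if none ∈ s.1 then none else some s.1.eraseNone
      invFun := fun o => o.elim ⟨{none}, Or.inr rfl⟩ fun A => ⟨A.map .some, by simp⟩
      left_inv := by
        rintro ⟨s, hs | rfl⟩
        · simp [hs]
        · simp
      right_inv := by rintro (_ | A) <;> simp }
  rw [iota, Nat.card_congr ((Equiv.subtypeEquivRight (isIndep_star_iff G hG)).trans e)]
  simp

theorem stmt_3_general (t : ℕ)
    (F : SimpleGraph (Σ j : Fin t, Option (Fin (2 ^ (j : ℕ)))))
    (hF : ∀ x y : (Σ j : Fin t, Option (Fin (2 ^ (j : ℕ)))),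
      F.Adj x y ↔ x.1 = y.1 ∧ ((x.2 = none ∧ y.2 ≠ none) ∨ (y.2 = none ∧ x.2 ≠ none))) :
    iota F = 2 ^ (2 ^ t) - 1 ∧
      Fintype.card (Σ j : Fin t, Option (Fin (2 ^ (j : ℕ)))) = 2 ^ t + t - 1 := by
  have iota_fibre : ∀ j : Fin t, iota (F.comap (Sigma.mk j)) = Nat.fermatNumber j := fun j =>
    (iota_star _ fun a b => by simp [hF]).trans (by simp [Nat.fermatNumber])
  constructor
  · rw [iota_sigma_eq_prod F fun x y h => ((hF x y).1 h).1,
      prod_congr rfl fun j _ => iota_fibre j, Fin.prod_univ_eq_prod_range Nat.fermatNumber,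
      Nat.prod_fermatNumber, Nat.fermatNumber]
    omega
  · simp only [Fintype.card_sigma, Fintype.card_option, Fintype.card_fin,
      Fin.sum_univ_eq_sum_range (fun j => 2 ^ j + 1), sum_add_distrib, Nat.geomSum_eq le_rfl,
      Nat.add_one_sub_one, Nat.div_one, sum_const, card_range, smul_eq_mul, mul_one]
    have := Nat.one_le_two_pow (n := t)
    omega

/-- For `t ≥ 1`, the disjoint union of the stars `K_{2^j,1}` for `j = 0, …, t-1`
(the vertex of component `j` is `none` for the center and `some leaf` otherwise)
has exactly `2^(2^t) - 1` independent sets and `2^t + t - 1` vertices. -/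
theorem stmt_3 (t : ℕ) (ht : 1 ≤ t)
    (F : SimpleGraph (Σ j : Fin t, Option (Fin (2 ^ (j : ℕ)))))
    (hF : ∀ x y : (Σ j : Fin t, Option (Fin (2 ^ (j : ℕ)))),
      F.Adj x y ↔ x.1 = y.1 ∧ ((x.2 = none ∧ y.2 ≠ none) ∨ (y.2 = none ∧ x.2 ≠ none))) :
    iota F = 2 ^ (2 ^ t) - 1 ∧
      Fintype.card (Σ j : Fin t, Option (Fin (2 ^ (j : ℕ)))) = 2 ^ t + t - 1 :=
  stmt_3_general t F hF
end

section
/- For every bipartite graph G without isolated vertices there exists a bipartite graph G' without isolated vertices with ν(G') = ν(G) + 4 vertices and ι_m(G') = 2·ι_m(G) + 1 maximal independent sets. -/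
/-! Attach the path `0 – 1 – 2 – 3` to `G`, joining vertex `1` to every vertex of the part `L`
of a bipartition `(L, R)`. A maximal independent set containing `1` avoids `L`, `0` and `2`, so
it contains `3` and, by maximality, all of `R`: it is `R ∪ {1, 3}`. A maximal independent set
avoiding `1` contains `0` (whose only neighbour is `1`) and exactly one of `2`, `3`; with `1`
absent nothing outside `G` dominates `L`, so its trace on `G` is an arbitrary maximal independent
set of `G`. Hence there are `2 ι_m(G) + 1` of them, and the new graph is still bipartite, with
parts `L ∪ {0, 2}` and `R ∪ {1, 3}`, and without isolated vertices. -/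

open Finset Sum

lemma isMaxIndep_iff {V : Type*} (G : SimpleGraph V) (s : Finset V) :
    IsMaxIndep G s ↔ IsIndep G s ∧ ∀ v ∉ s, ∃ u ∈ s, G.Adj u v := by
  classical
  refine ⟨fun ⟨hs, hmax⟩ => ⟨hs, fun v hv => ?_⟩, fun ⟨hs, hdom⟩ => ⟨hs, fun t ht hst => ?_⟩⟩
  · by_contra! hfree
    have hins : IsIndep G (insert v s) := by
      simp only [IsIndep, mem_insert, forall_eq_or_imp]
      exact ⟨⟨G.loopless.irrefl v, fun u hu huv => hfree u hu huv.symm⟩,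
        fun u hu => ⟨hfree u hu, hs u hu⟩⟩
    exact hv (hmax _ hins (subset_insert v s) ▸ mem_insert_self v s)
  · refine hst.antisymm fun v hvt => ?_
    by_contra hvs
    obtain ⟨u, hus, huv⟩ := hdom v hvs
    exact ht u (hst hus) v hvt huv

lemma IsBipartition.eq_right_iff {V : Type*} {G : SimpleGraph V} {L R : Finset V}
    (hLR : IsBipartition G L R) (A : Finset V) :
    (IsIndep G A ∧ Disjoint A L ∧ ∀ v ∉ A, (∃ u ∈ A, G.Adj u v) ∨ v ∈ L) ↔ A = R := by
  obtain ⟨hdisj, hcover, hcross⟩ := hLR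
  constructor
  · rintro ⟨-, hAL, hdom⟩
    have hAR : A ⊆ R := fun u hu => (hcover u).resolve_left (disjoint_left.1 hAL hu)
    refine hAR.antisymm fun r hr => ?_
    by_contra hrA
    have hrL : r ∉ L := disjoint_right.1 hdisj hr
    obtain ⟨u, hu, hur⟩ := (hdom r hrA).resolve_right hrL
    rcases hcross u r hur with ⟨huL, -⟩ | ⟨-, hrL'⟩
    · exact disjoint_left.1 hAL hu huL
    · exact hrL hrL'
  · rintro rfl
    refine ⟨fun u hu v hv huv => ?_, hdisj.symm, fun v hv => .inr ((hcover v).resolve_right hv)⟩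
    rcases hcross u v huv with ⟨huL, -⟩ | ⟨-, hvL⟩
    · exact disjoint_right.1 hdisj hu huL
    · exact disjoint_right.1 hdisj hv hvL

section Iso

variable {V W : Type*} {G : SimpleGraph V} {H : SimpleGraph W}

lemma isIndep_map_iff (e : G ≃g H) (s : Finset V) :
    IsIndep H (e.toEquiv.finsetCongr s) ↔ IsIndep G s := by
  simp only [IsIndep, Equiv.finsetCongr_apply, forall_mem_map, Equiv.coe_toEmbedding,
    RelIso.coe_fn_toEquiv, SimpleGraph.Iso.map_adj_iff]

lemma isMaxIndep_map_iff (e : G ≃g H) (s : Finset V) :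
    IsMaxIndep H (e.toEquiv.finsetCongr s) ↔ IsMaxIndep G s := by
  rw [isMaxIndep_iff, isMaxIndep_iff, isIndep_map_iff, ← e.toEquiv.forall_congr_right]
  simp [Equiv.finsetCongr_apply, -mem_map_equiv, mem_map, SimpleGraph.Iso.map_adj_iff]

lemma iotaM_congr [Fintype V] [Fintype W] (e : G ≃g H) : iotaM G = iotaM H :=
  Nat.card_congr (e.toEquiv.finsetCongr.subtypeEquiv fun s => (isMaxIndep_map_iff e s).symm)

lemma IsBipartite.of_iso (h : IsBipartite G) (e : G ≃g H) : IsBipartite H := by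
  obtain ⟨L, R, hdisj, hcover, hcross⟩ := h
  refine ⟨e.toEquiv.finsetCongr L, e.toEquiv.finsetCongr R, ?_, fun w => ?_, fun u v huv => ?_⟩
  · simpa [Equiv.finsetCongr_apply, -mem_map_equiv, mem_map] using hdisj
  · obtain ⟨v, rfl⟩ := e.surjective w
    simpa [Equiv.finsetCongr_apply, -mem_map_equiv, mem_map] using hcover v
  · obtain ⟨u, rfl⟩ := e.surjective u
    obtain ⟨v, rfl⟩ := e.surjective v
    simpa [Equiv.finsetCongr_apply, -mem_map_equiv, mem_map] using
      hcross _ _ (e.map_adj_iff.mp huv)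

lemma NoIsolated.of_iso (h : NoIsolated G) (e : G ≃g H) : NoIsolated H := fun w => by
  obtain ⟨u, hu⟩ := h (e.symm w)
  exact ⟨e u, by simpa using e.map_adj_iff.mpr hu⟩

end Iso

section Glue

variable {V W : Type*}

/-- The gluing of the paper with `G̃ = H`, `U₁ = {c}`, `U₂ = ∅`: `c` is joined to all of `L`. -/
def glue (G : SimpleGraph V) (H : SimpleGraph W) (L : Finset V) (c : W) :
    SimpleGraph (V ⊕ W) :=
  (G ⊕g H) ⊔ SimpleGraph.fromRel fun a b : V ⊕ W => ∃ u ∈ L, a = inl u ∧ b = inr c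

variable {G : SimpleGraph V} {H : SimpleGraph W} {L : Finset V} {c : W} {A : Finset V}
  {B : Finset W}

@[simp] lemma glue_adj_inl_inl {u v : V} : (glue G H L c).Adj (inl u) (inl v) ↔ G.Adj u v := by
  simp [glue]

@[simp] lemma glue_adj_inr_inr {w x : W} : (glue G H L c).Adj (inr w) (inr x) ↔ H.Adj w x := by
  simp [glue]

@[simp] lemma glue_adj_inl_inr {u : V} {w : W} :
    (glue G H L c).Adj (inl u) (inr w) ↔ u ∈ L ∧ w = c := by
  simp [glue, eq_comm]

@[simp] lemma glue_adj_inr_inl {u : V} {w : W} :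
    (glue G H L c).Adj (inr w) (inl u) ↔ u ∈ L ∧ w = c := by
  rw [SimpleGraph.adj_comm, glue_adj_inl_inr]

lemma IsBipartition.glue {R : Finset V} {L' R' : Finset W} (hG : IsBipartition G L R)
    (hH : IsBipartition H L' R') (hc : c ∈ R') :
    IsBipartition (glue G H L c) (L.disjSum L') (R.disjSum R') := by
  obtain ⟨hdisj, hcover, hcross⟩ := hG
  obtain ⟨hdisj', hcover', hcross'⟩ := hH
  refine ⟨?_, ?_, ?_⟩
  · rw [disjoint_left] at hdisj hdisj' ⊢
    rintro (u | w)
    · simpa using @hdisj u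
    · simpa using @hdisj' w
  · rintro (u | w)
    · simpa using hcover u
    · simpa using hcover' w
  · rintro (u | w) (v | x) huv
    · simpa using hcross u v (glue_adj_inl_inl.mp huv)
    · obtain ⟨hu, rfl⟩ := glue_adj_inl_inr.mp huv
      simp [hu, hc]
    · obtain ⟨hv, rfl⟩ := glue_adj_inr_inl.mp huv
      simp [hv, hc]
    · simpa using hcross' w x (glue_adj_inr_inr.mp huv)

lemma NoIsolated.glue (hG : NoIsolated G) (hH : NoIsolated H) : NoIsolated (glue G H L c) := by
  rintro (u | w)
  · obtain ⟨v, huv⟩ := hG u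
    exact ⟨inl v, glue_adj_inl_inl.mpr huv⟩
  · obtain ⟨x, hwx⟩ := hH w
    exact ⟨inr x, glue_adj_inr_inr.mpr hwx⟩

lemma isIndep_glue_disjSum_iff :
    IsIndep (glue G H L c) (A.disjSum B) ↔ IsIndep G A ∧ IsIndep H B ∧ (c ∈ B → Disjoint A L) := by
  constructor
  · intro h
    refine ⟨fun u hu v hv huv => ?_, fun w hw x hx hwx => ?_, fun hc => disjoint_left.2 ?_⟩
    · exact h _ (inl_mem_disjSum.2 hu) _ (inl_mem_disjSum.2 hv) (glue_adj_inl_inl.2 huv)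
    · exact h _ (inr_mem_disjSum.2 hw) _ (inr_mem_disjSum.2 hx) (glue_adj_inr_inr.2 hwx)
    · exact fun u hu huL =>
        h _ (inl_mem_disjSum.2 hu) _ (inr_mem_disjSum.2 hc) (glue_adj_inl_inr.2 ⟨huL, rfl⟩)
  · rintro ⟨hA, hB, hAL⟩ (u | w) hu (v | x) hv
    · simpa using hA u (inl_mem_disjSum.1 hu) v (inl_mem_disjSum.1 hv)
    · rw [glue_adj_inl_inr, not_and]
      rintro huL rfl
      exact disjoint_left.1 (hAL (inr_mem_disjSum.1 hv)) (inl_mem_disjSum.1 hu) huL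
    · rw [glue_adj_inr_inl, not_and]
      rintro hvL rfl
      exact disjoint_left.1 (hAL (inr_mem_disjSum.1 hu)) (inl_mem_disjSum.1 hv) hvL
    · simpa using hB w (inr_mem_disjSum.1 hu) x (inr_mem_disjSum.1 hv)

lemma dominates_glue_disjSum_iff :
    (∀ s ∉ A.disjSum B, ∃ t ∈ A.disjSum B, (glue G H L c).Adj t s) ↔
      (∀ v ∉ A, (∃ u ∈ A, G.Adj u v) ∨ (v ∈ L ∧ c ∈ B)) ∧
      (∀ w ∉ B, (∃ x ∈ B, H.Adj x w) ∨ (w = c ∧ ∃ u ∈ A, u ∈ L)) := by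
  simp only [Sum.forall, Sum.exists, inl_mem_disjSum, inr_mem_disjSum, glue_adj_inl_inl,
    glue_adj_inl_inr, glue_adj_inr_inl, glue_adj_inr_inr]
  constructor
  · rintro ⟨hA, hB⟩
    refine ⟨fun v hv => (hA v hv).imp_right ?_, fun w hw => (hB w hw).symm.imp_right ?_⟩
    · rintro ⟨x, hx, hvL, rfl⟩; exact ⟨hvL, hx⟩
    · rintro ⟨u, hu, huL, rfl⟩; exact ⟨rfl, u, hu, huL⟩
  · rintro ⟨hA, hB⟩
    refine ⟨fun v hv => (hA v hv).imp_right ?_, fun w hw => (hB w hw).symm.imp_left ?_⟩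
    · rintro ⟨hvL, hc⟩; exact ⟨c, hc, hvL, rfl⟩
    · rintro ⟨rfl, u, hu, huL⟩; exact ⟨u, hu, huL, rfl⟩

lemma isMaxIndep_glue_disjSum_iff_of_mem (hc : c ∈ B) :
    IsMaxIndep (glue G H L c) (A.disjSum B) ↔
      (IsIndep G A ∧ Disjoint A L ∧ ∀ v ∉ A, (∃ u ∈ A, G.Adj u v) ∨ v ∈ L) ∧
      IsMaxIndep H B := by
  rw [isMaxIndep_iff, isMaxIndep_iff, isIndep_glue_disjSum_iff, dominates_glue_disjSum_iff]
  have hB_ne : ∀ w ∉ B, w ≠ c := fun w hw hwc => hw (hwc ▸ hc)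
  simp only [hc, true_implies, and_true]
  constructor
  · rintro ⟨⟨hA, hB, hAL⟩, hdomA, hdomB⟩
    exact ⟨⟨hA, hAL, hdomA⟩, hB, fun w hw => (hdomB w hw).resolve_right fun h => hB_ne w hw h.1⟩
  · rintro ⟨⟨hA, hAL, hdomA⟩, hB, hdomB⟩
    exact ⟨⟨hA, hB, hAL⟩, hdomA, fun w hw => .inl (hdomB w hw)⟩

lemma isMaxIndep_glue_disjSum_iff_of_notMem (hc : c ∉ B) :
    IsMaxIndep (glue G H L c) (A.disjSum B) ↔
      IsMaxIndep G A ∧ IsIndep H B ∧ ∀ w ∉ B, (∃ x ∈ B, H.Adj x w) ∨ (w = c ∧ ∃ u ∈ A, u ∈ L) := by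
  rw [isMaxIndep_iff, isMaxIndep_iff, isIndep_glue_disjSum_iff, dominates_glue_disjSum_iff]
  simp only [hc, false_implies, and_true, and_false, or_false]
  tauto

end Glue

section PathGraph

open SimpleGraph

instance (n : ℕ) : DecidableRel (pathGraph n).Adj := fun _ _ => decidable_of_iff' _ pathGraph_adj

lemma isBipartition_pathGraph_four : IsBipartition (pathGraph 4) {0, 2} {1, 3} := by
  unfold IsBipartition; decide

lemma noIsolated_pathGraph_four : NoIsolated (pathGraph 4) := by
  unfold NoIsolated; decide

lemma isMaxIndep_pathGraph_four_iff_of_one_mem {B : Finset (Fin 4)} (h1 : 1 ∈ B) :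
    IsMaxIndep (pathGraph 4) B ↔ B = {1, 3} := by
  rw [isMaxIndep_iff]
  revert B
  unfold IsIndep
  decide

/-- `p` says whether vertex `1` is dominated from outside the path. -/
lemma pathGraph_four_dominates_iff_of_one_notMem {B : Finset (Fin 4)} (h1 : 1 ∉ B) (p : Prop) :
    (IsIndep (pathGraph 4) B ∧ ∀ w ∉ B, (∃ x ∈ B, (pathGraph 4).Adj x w) ∨ (w = 1 ∧ p)) ↔
      B = {0, 2} ∨ B = {0, 3} := by
  unfold IsIndep
  by_cases hp : p <;> simp only [hp, and_true, and_false, or_false] <;> revert B <;> decide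

end PathGraph

section AttachPath

open SimpleGraph

variable {V : Type*} {G : SimpleGraph V} {L R : Finset V}

lemma isMaxIndep_glue_pathGraph_four_iff (hLR : IsBipartition G L R) (A : Finset V)
    (B : Finset (Fin 4)) :
    IsMaxIndep (glue G (pathGraph 4) L 1) (A.disjSum B) ↔
      (A = R ∧ B = {1, 3}) ∨ (IsMaxIndep G A ∧ (B = {0, 2} ∨ B = {0, 3})) := by
  by_cases h1 : 1 ∈ B
  · have hB : ¬(B = {0, 2} ∨ B = {0, 3}) := by rintro (rfl | rfl) <;> simp at h1
    rw [isMaxIndep_glue_disjSum_iff_of_mem h1, hLR.eq_right_iff,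
      isMaxIndep_pathGraph_four_iff_of_one_mem h1]
    simp only [hB, and_false, or_false]
  · have hB : B ≠ {1, 3} := by rintro rfl; simp at h1
    rw [isMaxIndep_glue_disjSum_iff_of_notMem h1, pathGraph_four_dominates_iff_of_one_notMem h1]
    simp only [hB, and_false, false_or]

lemma iotaM_glue_pathGraph_four [Fintype V] (hLR : IsBipartition G L R) :
    iotaM (glue G (pathGraph 4) L 1) = 2 * iotaM G + 1 := by
  set S : Set (Finset V × Finset (Fin 4)) :=
    {(R, {1, 3})} ∪ {A | IsMaxIndep G A} ×ˢ {{0, 2}, {0, 3}}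
  have hS : {p | IsMaxIndep (glue G (pathGraph 4) L 1) (p.1.disjSum p.2)} = S := by
    ext ⟨A, B⟩
    simp [S, isMaxIndep_glue_pathGraph_four_iff hLR]
  have hdisj : Disjoint {(R, ({1, 3} : Finset (Fin 4)))}
      ({A | IsMaxIndep G A} ×ˢ {{0, 2}, {0, 3}} : Set (Finset V × Finset (Fin 4))) := by
    rw [Set.disjoint_singleton_left]
    rintro ⟨-, hB⟩
    simp only [Set.mem_insert_iff, Set.mem_singleton_iff] at hB
    revert hB
    decide
  calc iotaM (glue G (pathGraph 4) L 1)
      = Nat.card {p : Finset V × Finset (Fin 4) //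
          IsMaxIndep (glue G (pathGraph 4) L 1) (p.1.disjSum p.2)} :=
        (Nat.card_congr (sumEquiv.toEquiv.symm.subtypeEquiv fun _ => Iff.rfl)).symm
    _ = S.ncard := by rw [← hS]; rfl
    _ = 2 * iotaM G + 1 := by
        rw [Set.ncard_union_eq hdisj, Set.ncard_singleton, Set.ncard_prod,
          Set.ncard_pair (by decide)]
        change 1 + iotaM G * 2 = _
        ring

end AttachPath

/-- For every bipartite graph `G` without isolated vertices there is a bipartite
graph `G'` without isolated vertices with `ν(G) + 4` vertices and `2·ι_m(G) + 1`
maximal independent sets. -/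
theorem stmt_11 {V : Type*} [Fintype V] (G : SimpleGraph V)
    (hbip : IsBipartite G) (hiso : NoIsolated G) :
    ∃ (W : Type) (_ : Fintype W) (G' : SimpleGraph W),
      IsBipartite G' ∧ NoIsolated G' ∧
      Fintype.card W = Fintype.card V + 4 ∧ iotaM G' = 2 * iotaM G + 1 := by
  obtain ⟨L, R, hLR⟩ := hbip
  let G' := glue G (SimpleGraph.pathGraph 4) L 1
  let f := Fintype.equivFin (V ⊕ Fin 4)
  let e := SimpleGraph.Iso.map f G'
  refine ⟨Fin (Fintype.card (V ⊕ Fin 4)), inferInstance, G'.map f, ?_, ?_, by simp, ?_⟩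
  · exact IsBipartite.of_iso ⟨_, _, hLR.glue isBipartition_pathGraph_four (by decide)⟩ e
  · exact (hiso.glue noIsolated_pathGraph_four).of_iso e
  · rw [← iotaM_congr e, iotaM_glue_pathGraph_four hLR]
end

section
/- For any two vertex-disjoint bipartite graphs G and G̃, each without isolated vertices, there exists a bipartite graph without isolated vertices having ν(G) + ν(G̃) + 4 vertices and exactly ι_m(G) + ι_m(G̃) maximal independent sets. -/
/-!
Let `(L₁, R₁)` and `(L₂, R₂)` be bipartitions of `G` and `G̃`. In a bipartite graph without
isolated vertices the maximal independent sets are the two sides and the "mixed" ones, meeting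
both sides. Join `L₁` completely to `L₂` and `R₁` to `R₂`. A mixed set of `G` is adjacent to every
vertex of `G̃`, so it stays maximal, and likewise for `G̃`; the four sides merge into the two sides
`L₁ ∪ R₂` and `R₁ ∪ L₂` of the join, which therefore has `ι_m(G) + ι_m(G̃) - 2` maximal
independent sets. Attaching a path `p₀p₁p₂p₃` with `p₁` joined to one side `X` of the join and
`p₂` to the other side `Y` adds exactly two: the maximal independent sets become `X ∪ {p₀, p₂}`,
`Y ∪ {p₁, p₃}`, and `S ∪ {p₀, p₃}` for `S` maximal in the join.
If one graph is empty, so that its `ι_m` is `1`, a `4`-cycle `p₀p₁p₂p₃` with `p₀, p₂` joined to a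
side `L` of the other graph adds exactly one set, `R ∪ {p₀, p₂}`.
-/

open Finset

section MaxIndep

variable {V W : Type*}

theorem isMaxIndep_iff_forall_exists_adj {G : SimpleGraph V} {s : Finset V} :
    IsMaxIndep G s ↔ IsIndep G s ∧ ∀ v ∉ s, ∃ u ∈ s, G.Adj v u := by
  classical
  refine ⟨fun ⟨hs, hmax⟩ => ⟨hs, fun v hv => ?_⟩, fun ⟨hs, hdom⟩ => ⟨hs, fun t ht hst => ?_⟩⟩
  · by_contra! hv'
    have hins : IsIndep G (insert v s) := by
      intro x hx y hy hxy
      rcases mem_insert.1 hx with rfl | hxs <;> rcases mem_insert.1 hy with rfl | hys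
      · exact hxy.ne rfl
      · exact hv' y hys hxy
      · exact hv' x hxs hxy.symm
      · exact hs x hxs y hys hxy
    exact hv (hmax _ hins (subset_insert v s) ▸ mem_insert_self v s)
  · refine hst.antisymm fun v hvt => ?_
    by_contra hvs
    obtain ⟨u, hu, hvu⟩ := hdom v hvs
    exact ht v hvt u (hst hu) hvu

theorem iotaM_eq_ncard [Fintype V] (G : SimpleGraph V) :
    iotaM G = {s | IsMaxIndep G s}.ncard := rfl

theorem iotaM_of_isEmpty [Fintype V] [IsEmpty V] (G : SimpleGraph V) : iotaM G = 1 := by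
  have hempty : IsMaxIndep G ∅ := ⟨by simp [IsIndep], fun t _ _ => (eq_empty_of_isEmpty t).symm⟩
  have : Unique {s : Finset V // IsMaxIndep G s} :=
    ⟨⟨⟨∅, hempty⟩⟩, fun s => Subtype.ext (eq_empty_of_isEmpty _)⟩
  exact Nat.card_unique

theorem isMaxIndep_comap_iff {G : SimpleGraph V} (f : W ≃ V) {s : Finset W} :
    IsMaxIndep (G.comap f) s ↔ IsMaxIndep G (s.map f.toEmbedding) := by
  simp [isMaxIndep_iff_forall_exists_adj, IsIndep, f.surjective.forall, f.surjective.exists]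

theorem iotaM_comap [Fintype V] [Fintype W] (G : SimpleGraph V) (f : W ≃ V) :
    iotaM (G.comap f) = iotaM G :=
  Nat.card_congr <| f.finsetCongr.subtypeEquiv fun _ => isMaxIndep_comap_iff f

theorem NoIsolated.comap {G : SimpleGraph V} (hG : NoIsolated G) (f : W ≃ V) :
    NoIsolated (G.comap f) := fun w => by
  obtain ⟨v, hv⟩ := hG (f w)
  exact ⟨f.symm v, by simpa using hv⟩

theorem IsBipartite.comap {G : SimpleGraph V} (hG : IsBipartite G) (f : W ≃ V) :
    IsBipartite (G.comap f) := by
  obtain ⟨L, R, hLR, hcover, hedge⟩ := hG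
  refine ⟨L.map f.symm.toEmbedding, R.map f.symm.toEmbedding, (disjoint_map _).2 hLR, ?_, ?_⟩
  · simpa [mem_map_equiv] using fun w => hcover (f w)
  · simpa [mem_map_equiv] using fun u v => hedge (f u) (f v)

end MaxIndep

namespace IsBipartition

variable {V : Type*} {G : SimpleGraph V} {L R s : Finset V} {u v : V}

theorem symm (h : IsBipartition G L R) : IsBipartition G R L :=
  ⟨h.1.symm, fun v => (h.2.1 v).symm, fun u v huv => (h.2.2 u v huv).symm⟩

theorem notMem_right (h : IsBipartition G L R) (hv : v ∈ L) : v ∉ R :=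
  disjoint_left.1 h.1 hv

theorem mem_right_of_notMem_left (h : IsBipartition G L R) (hv : v ∉ L) : v ∈ R :=
  (h.2.1 v).resolve_left hv

theorem mem_right_of_adj (h : IsBipartition G L R) (huv : G.Adj u v) (hu : u ∈ L) : v ∈ R :=
  ((h.2.2 u v huv).resolve_right fun h' => h.notMem_right hu h'.1).2

theorem isIndep_left (h : IsBipartition G L R) : IsIndep G L :=
  fun _ hu _ hv huv => h.notMem_right hv (h.mem_right_of_adj huv hu)

theorem isMaxIndep_left (h : IsBipartition G L R) (hiso : NoIsolated G) : IsMaxIndep G L := by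
  refine isMaxIndep_iff_forall_exists_adj.2 ⟨h.isIndep_left, fun v hv => ?_⟩
  obtain ⟨u, hvu⟩ := hiso v
  exact ⟨u, h.symm.mem_right_of_adj hvu (h.mem_right_of_notMem_left hv), hvu⟩

theorem nonempty_left [Nonempty V] (h : IsBipartition G L R) (hiso : NoIsolated G) :
    L.Nonempty := by
  obtain ⟨v⟩ := ‹Nonempty V›
  obtain ⟨u, hvu⟩ := hiso v
  rcases h.2.1 v with hv | hv
  · exact ⟨v, hv⟩
  · exact ⟨u, h.symm.mem_right_of_adj hvu hv⟩

theorem left_ne_right (h : IsBipartition G L R) (hL : L.Nonempty) : L ≠ R := by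
  obtain ⟨v, hv⟩ := hL
  exact fun hLR => h.notMem_right hv (hLR ▸ hv)

theorem eq_left_of_disjoint_right (h : IsBipartition G L R) (hs : IsMaxIndep G s)
    (hsR : Disjoint s R) : s = L :=
  hs.2 L h.isIndep_left fun v hv => by
    by_contra hvL
    exact disjoint_left.1 hsR hv (h.mem_right_of_notMem_left hvL)

theorem eq_of_isMaxIndep (h : IsBipartition G L R) (hs : IsMaxIndep G s) :
    s = L ∨ s = R ∨ ¬Disjoint s L ∧ ¬Disjoint s R := by
  by_cases hsR : Disjoint s R
  · exact .inl (h.eq_left_of_disjoint_right hs hsR)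
  by_cases hsL : Disjoint s L
  · exact .inr (.inl (h.symm.eq_left_of_disjoint_right hs hsL))
  exact .inr (.inr ⟨hsL, hsR⟩)

theorem eq_right_of_forall_exists_adj (h : IsBipartition G L R) (hsL : ∀ v ∈ s, v ∉ L)
    (hdom : ∀ v ∉ s, (∃ u ∈ s, G.Adj v u) ∨ v ∈ L) : s = R := by
  ext v
  refine ⟨fun hv => h.mem_right_of_notMem_left (hsL v hv), fun hvR => ?_⟩
  by_contra hvs
  rcases hdom v hvs with ⟨u, hu, hvu⟩ | hvL
  · exact hsL u hu (h.symm.mem_right_of_adj hvu hvR)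
  · exact h.notMem_right hvL hvR

end IsBipartition

namespace SimpleGraph

variable {V W : Type*}

def sumWith (G : SimpleGraph V) (H : SimpleGraph W) (C : V → W → Prop) :
    SimpleGraph (V ⊕ W) where
  Adj
    | .inl a, .inl a' => G.Adj a a'
    | .inr b, .inr b' => H.Adj b b'
    | .inl a, .inr b => C a b
    | .inr b, .inl a => C a b
  symm := ⟨by
    rintro (a | b) (a' | b') h
    exacts [h.symm, h, h, h.symm]⟩
  loopless := ⟨by
    rintro (a | b) h
    exacts [G.loopless.irrefl a h, H.loopless.irrefl b h]⟩

variable {G : SimpleGraph V} {H : SimpleGraph W} {C : V → W → Prop}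

@[simp] theorem sumWith_adj_inl_inl {a a' : V} :
    (G.sumWith H C).Adj (.inl a) (.inl a') ↔ G.Adj a a' := Iff.rfl

@[simp] theorem sumWith_adj_inr_inr {b b' : W} :
    (G.sumWith H C).Adj (.inr b) (.inr b') ↔ H.Adj b b' := Iff.rfl

@[simp] theorem sumWith_adj_inl_inr {a : V} {b : W} :
    (G.sumWith H C).Adj (.inl a) (.inr b) ↔ C a b := Iff.rfl

@[simp] theorem sumWith_adj_inr_inl {a : V} {b : W} :
    (G.sumWith H C).Adj (.inr b) (.inl a) ↔ C a b := Iff.rfl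

end SimpleGraph

section SumWith

variable {V W : Type*} {G : SimpleGraph V} {H : SimpleGraph W} {C : V → W → Prop}

theorem isMaxIndep_sumWith_disjSum_iff {A : Finset V} {B : Finset W} :
    IsMaxIndep (G.sumWith H C) (A.disjSum B) ↔
      (IsIndep G A ∧ IsIndep H B ∧ ∀ a ∈ A, ∀ b ∈ B, ¬C a b) ∧
      (∀ a ∉ A, (∃ a' ∈ A, G.Adj a a') ∨ ∃ b ∈ B, C a b) ∧
      ∀ b ∉ B, (∃ b' ∈ B, H.Adj b b') ∨ ∃ a ∈ A, C a b := by
  simp only [isMaxIndep_iff_forall_exists_adj, IsIndep, Sum.forall, Sum.exists,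
    inl_mem_disjSum, inr_mem_disjSum, SimpleGraph.sumWith_adj_inl_inl,
    SimpleGraph.sumWith_adj_inr_inr, SimpleGraph.sumWith_adj_inl_inr,
    SimpleGraph.sumWith_adj_inr_inl]
  constructor
  · rintro ⟨⟨hA, hB⟩, hdomA, hdomB⟩
    exact ⟨⟨fun a ha => (hA a ha).1, fun b hb => (hB b hb).2, fun a ha => (hA a ha).2⟩,
      hdomA, fun b hb => (hdomB b hb).symm⟩
  · rintro ⟨⟨hA, hB, hAB⟩, hdomA, hdomB⟩
    exact ⟨⟨fun a ha => ⟨hA a ha, hAB a ha⟩, fun b hb => ⟨fun a ha => hAB a ha b hb, hB b hb⟩⟩,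
      hdomA, fun b hb => (hdomB b hb).symm⟩

theorem isMaxIndep_sumWith_disjSum_empty_iff {A : Finset V} :
    IsMaxIndep (G.sumWith H C) (A.disjSum ∅) ↔ IsMaxIndep G A ∧ ∀ b, ∃ a ∈ A, C a b := by
  rw [isMaxIndep_sumWith_disjSum_iff]
  simp [isMaxIndep_iff_forall_exists_adj, IsIndep, and_assoc]

theorem isMaxIndep_sumWith_empty_disjSum_iff {B : Finset W} :
    IsMaxIndep (G.sumWith H C) ((∅ : Finset V).disjSum B) ↔
      IsMaxIndep H B ∧ ∀ a, ∃ b ∈ B, C a b := by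
  rw [isMaxIndep_sumWith_disjSum_iff]
  simp [isMaxIndep_iff_forall_exists_adj, IsIndep, and_comm, and_left_comm]

theorem NoIsolated.sumWith (hG : NoIsolated G) (hH : NoIsolated H) (C : V → W → Prop) :
    NoIsolated (G.sumWith H C) := by
  rintro (a | b)
  · obtain ⟨a', h⟩ := hG a
    exact ⟨.inl a', h⟩
  · obtain ⟨b', h⟩ := hH b
    exact ⟨.inr b', h⟩

theorem IsBipartition.sumWith {L R : Finset V} {L' R' : Finset W}
    (hG : IsBipartition G L R) (hH : IsBipartition H L' R')
    (hC : ∀ a b, C a b → a ∈ L ∧ b ∈ R' ∨ a ∈ R ∧ b ∈ L') :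
    IsBipartition (G.sumWith H C) (L.disjSum L') (R.disjSum R') := by
  refine ⟨disjoint_left.2 ?_, ?_, ?_⟩
  · rintro (a | b) h h'
    exacts [disjoint_left.1 hG.1 (inl_mem_disjSum.1 h) (inl_mem_disjSum.1 h'),
      disjoint_left.1 hH.1 (inr_mem_disjSum.1 h) (inr_mem_disjSum.1 h')]
  · rintro (a | b)
    exacts [by simpa using hG.2.1 a, by simpa using hH.2.1 b]
  · rintro (a | b) (a' | b') h
    · simpa using hG.2.2 a a' h
    · simpa using hC a b' h
    · simpa [or_comm, and_comm] using hC a' b h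
    · simpa using hH.2.2 b b' h

end SumWith

section Join

variable {V α β : Type*}

def mixedMaxIndep (G : SimpleGraph V) (L R : Finset V) : Set (Finset V) :=
  {s | IsMaxIndep G s ∧ ¬Disjoint s L ∧ ¬Disjoint s R}

theorem IsBipartition.setOf_isMaxIndep {G : SimpleGraph V} {L R : Finset V}
    (h : IsBipartition G L R) (hiso : NoIsolated G) :
    {s | IsMaxIndep G s} = insert L (insert R (mixedMaxIndep G L R)) := by
  ext s
  constructor
  · intro hs
    rcases h.eq_of_isMaxIndep hs with rfl | rfl | hmixed
    exacts [.inl rfl, .inr (.inl rfl), .inr (.inr ⟨hs, hmixed⟩)]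
  · rintro (rfl | rfl | ⟨hs, -⟩)
    exacts [h.isMaxIndep_left hiso, h.symm.isMaxIndep_left hiso, hs]

theorem IsBipartition.iotaM_eq_ncard_mixedMaxIndep_add_two [Fintype V] [Nonempty V]
    {G : SimpleGraph V} {L R : Finset V} (h : IsBipartition G L R) (hiso : NoIsolated G) :
    iotaM G = (mixedMaxIndep G L R).ncard + 2 := by
  have hL : L ∉ insert R (mixedMaxIndep G L R) := by
    rintro (hLR | ⟨-, -, hLR⟩)
    exacts [h.left_ne_right (h.nonempty_left hiso) hLR, hLR h.1]
  have hR : R ∉ mixedMaxIndep G L R := fun ⟨_, hRL, _⟩ => hRL h.1.symm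
  rw [iotaM_eq_ncard, h.setOf_isMaxIndep hiso, Set.ncard_insert_of_notMem hL,
    Set.ncard_insert_of_notMem hR]

def bipartiteJoin (G : SimpleGraph α) (Gt : SimpleGraph β) (L₁ R₁ : Finset α)
    (L₂ R₂ : Finset β) : SimpleGraph (α ⊕ β) :=
  G.sumWith Gt fun a b => a ∈ L₁ ∧ b ∈ L₂ ∨ a ∈ R₁ ∧ b ∈ R₂

variable {G : SimpleGraph α} {Gt : SimpleGraph β} {L₁ R₁ : Finset α} {L₂ R₂ : Finset β}

theorem isBipartition_bipartiteJoin (hG : IsBipartition G L₁ R₁) (hGt : IsBipartition Gt L₂ R₂) :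
    IsBipartition (bipartiteJoin G Gt L₁ R₁ L₂ R₂) (L₁.disjSum R₂) (R₁.disjSum L₂) :=
  hG.sumWith hGt.symm fun _ _ => id

theorem exists_mem_join_left (hGt : IsBipartition Gt L₂ R₂) {A : Finset α}
    (hL : ¬Disjoint A L₁) (hR : ¬Disjoint A R₁) (b : β) :
    ∃ a ∈ A, a ∈ L₁ ∧ b ∈ L₂ ∨ a ∈ R₁ ∧ b ∈ R₂ := by
  obtain ⟨a, ha, haL⟩ := not_disjoint_iff.1 hL
  obtain ⟨a', ha', ha'R⟩ := not_disjoint_iff.1 hR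
  rcases hGt.2.1 b with hb | hb
  exacts [⟨a, ha, .inl ⟨haL, hb⟩⟩, ⟨a', ha', .inr ⟨ha'R, hb⟩⟩]

theorem exists_mem_join_right (hG : IsBipartition G L₁ R₁) {B : Finset β}
    (hL : ¬Disjoint B L₂) (hR : ¬Disjoint B R₂) (a : α) :
    ∃ b ∈ B, a ∈ L₁ ∧ b ∈ L₂ ∨ a ∈ R₁ ∧ b ∈ R₂ := by
  obtain ⟨b, hb, hbL⟩ := not_disjoint_iff.1 hL
  obtain ⟨b', hb', hb'R⟩ := not_disjoint_iff.1 hR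
  rcases hG.2.1 a with ha | ha
  exacts [⟨b, hb, .inl ⟨ha, hbL⟩⟩, ⟨b', hb', .inr ⟨ha, hb'R⟩⟩]

theorem mem_mixedMaxIndep_of_isMaxIndep_bipartiteJoin (hG : IsBipartition G L₁ R₁)
    (hGt : IsBipartition Gt L₂ R₂) {A : Finset α} {B : Finset β}
    (hs : IsMaxIndep (bipartiteJoin G Gt L₁ R₁ L₂ R₂) (A.disjSum B))
    (hP : ¬Disjoint (A.disjSum B) (L₁.disjSum R₂)) (hQ : ¬Disjoint (A.disjSum B) (R₁.disjSum L₂)) :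
    A ∈ mixedMaxIndep G L₁ R₁ ∧ B = ∅ ∨ B ∈ mixedMaxIndep Gt L₂ R₂ ∧ A = ∅ := by
  have hcross := (isMaxIndep_sumWith_disjSum_iff.1 hs).1.2.2
  obtain ⟨x, hxs, hxP⟩ := not_disjoint_iff.1 hP
  obtain ⟨y, hys, hyQ⟩ := not_disjoint_iff.1 hQ
  rcases x with a | b <;> rcases y with a' | b' <;>
    simp only [inl_mem_disjSum, inr_mem_disjSum] at hxs hxP hys hyQ
  · have hL := not_disjoint_iff.2 ⟨a, hxs, hxP⟩
    have hR := not_disjoint_iff.2 ⟨a', hys, hyQ⟩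
    have hjoin := exists_mem_join_left hGt hL hR
    obtain rfl : B = ∅ := eq_empty_of_forall_notMem fun b hb =>
      let ⟨a, ha, hab⟩ := hjoin b
      hcross a ha b hb hab
    exact .inl ⟨⟨(isMaxIndep_sumWith_disjSum_empty_iff.1 hs).1, hL, hR⟩, rfl⟩
  · exact absurd (.inl ⟨hxP, hyQ⟩) (hcross a hxs b' hys)
  · exact absurd (.inr ⟨hyQ, hxP⟩) (hcross a' hys b hxs)
  · have hL := not_disjoint_iff.2 ⟨b', hys, hyQ⟩
    have hR := not_disjoint_iff.2 ⟨b, hxs, hxP⟩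
    have hjoin := exists_mem_join_right hG hL hR
    obtain rfl : A = ∅ := eq_empty_of_forall_notMem fun a ha =>
      let ⟨b, hb, hab⟩ := hjoin a
      hcross a ha b hb hab
    exact .inr ⟨⟨(isMaxIndep_sumWith_empty_disjSum_iff.1 hs).1, hL, hR⟩, rfl⟩

theorem setOf_isMaxIndep_bipartiteJoin (hG : IsBipartition G L₁ R₁)
    (hGt : IsBipartition Gt L₂ R₂) (hisoG : NoIsolated G) (hisoGt : NoIsolated Gt) :
    {s | IsMaxIndep (bipartiteJoin G Gt L₁ R₁ L₂ R₂) s} =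
      insert (L₁.disjSum R₂) (insert (R₁.disjSum L₂)
        ((fun A : Finset α => A.disjSum (∅ : Finset β)) '' mixedMaxIndep G L₁ R₁ ∪
          (fun B => (∅ : Finset α).disjSum B) '' mixedMaxIndep Gt L₂ R₂)) := by
  have hJ := isBipartition_bipartiteJoin hG hGt
  have hisoJ : NoIsolated (bipartiteJoin G Gt L₁ R₁ L₂ R₂) := hisoG.sumWith hisoGt _
  ext s
  obtain ⟨A, B, rfl⟩ : ∃ (A : Finset α) (B : Finset β), s = A.disjSum B :=
    ⟨_, _, s.toLeft_disjSum_toRight.symm⟩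
  simp only [Set.mem_ofPred_eq, Set.mem_insert_iff, Set.mem_union, Set.mem_image, disjSum_inj]
  constructor
  · intro hs
    rcases hJ.eq_of_isMaxIndep hs with hP | hQ | ⟨hP, hQ⟩
    · exact .inl (disjSum_inj.1 hP)
    · exact .inr (.inl (disjSum_inj.1 hQ))
    rcases mem_mixedMaxIndep_of_isMaxIndep_bipartiteJoin hG hGt hs hP hQ with
      ⟨hA, rfl⟩ | ⟨hB, rfl⟩
    exacts [.inr (.inr (.inl ⟨A, hA, rfl, rfl⟩)), .inr (.inr (.inr ⟨B, hB, rfl, rfl⟩))]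
  · rintro (⟨rfl, rfl⟩ | ⟨rfl, rfl⟩ | ⟨A, ⟨hA, hL, hR⟩, rfl, rfl⟩ | ⟨B, ⟨hB, hL, hR⟩, rfl, rfl⟩)
    · exact hJ.isMaxIndep_left hisoJ
    · exact hJ.symm.isMaxIndep_left hisoJ
    · exact isMaxIndep_sumWith_disjSum_empty_iff.2 ⟨hA, exists_mem_join_left hGt hL hR⟩
    · exact isMaxIndep_sumWith_empty_disjSum_iff.2 ⟨hB, exists_mem_join_right hG hL hR⟩

theorem iotaM_bipartiteJoin_add_two [Fintype α] [Fintype β] [Nonempty α] [Nonempty β]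
    (hG : IsBipartition G L₁ R₁) (hGt : IsBipartition Gt L₂ R₂) (hisoG : NoIsolated G)
    (hisoGt : NoIsolated Gt) :
    iotaM (bipartiteJoin G Gt L₁ R₁ L₂ R₂) + 2 = iotaM G + iotaM Gt := by
  have hL₁ := (hG.nonempty_left hisoG).ne_empty
  have hR₁ := (hG.symm.nonempty_left hisoG).ne_empty
  have hL₂ := (hGt.nonempty_left hisoGt).ne_empty
  have hR₂ := (hGt.symm.nonempty_left hisoGt).ne_empty
  rw [hG.iotaM_eq_ncard_mixedMaxIndep_add_two hisoG,
    hGt.iotaM_eq_ncard_mixedMaxIndep_add_two hisoGt, iotaM_eq_ncard,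
    setOf_isMaxIndep_bipartiteJoin hG hGt hisoG hisoGt, Set.ncard_insert_of_notMem ?hP,
    Set.ncard_insert_of_notMem ?hQ, Set.ncard_union_eq ?hdisj,
    Set.ncard_image_of_injective _ fun _ _ h => (disjSum_inj.1 h).1,
    Set.ncard_image_of_injective _ fun _ _ h => (disjSum_inj.1 h).2]
  · ring
  case hP =>
    rintro (h | ⟨A, -, h⟩ | ⟨B, -, h⟩)
    · exact hG.left_ne_right (hG.nonempty_left hisoG) (disjSum_inj.1 h).1
    · exact hR₂ (disjSum_inj.1 h).2.symm
    · exact hL₁ (disjSum_inj.1 h).1.symm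
  case hQ =>
    rintro (⟨A, -, h⟩ | ⟨B, -, h⟩)
    · exact hL₂ (disjSum_inj.1 h).2.symm
    · exact hR₁ (disjSum_inj.1 h).1.symm
  case hdisj =>
    rw [Set.disjoint_left]
    rintro _ ⟨A, ⟨-, hA, -⟩, rfl⟩ ⟨B, -, h⟩
    rw [← (disjSum_inj.1 h).1] at hA
    exact hA (disjoint_empty_left L₁)

end Join

open SimpleGraph (pathGraph pathGraph_adj cycleGraph)

section AttachPath

variable {V : Type*} {H : SimpleGraph V} {X Y : Finset V}

instance inst_s13 (n : ℕ) : DecidableRel (pathGraph n).Adj :=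
  fun _ _ => decidable_of_iff' _ pathGraph_adj

def attachPath (H : SimpleGraph V) (X Y : Finset V) : SimpleGraph (V ⊕ Fin 4) :=
  H.sumWith (pathGraph 4) fun v i => i = 1 ∧ v ∈ X ∨ i = 2 ∧ v ∈ Y

theorem eq_of_isIndep_pathGraph_four {B : Finset (Fin 4)} (hB : IsIndep (pathGraph 4) B)
    (hdom : ∀ i ∉ B, i = 1 ∨ i = 2 ∨ ∃ j ∈ B, (pathGraph 4).Adj i j) :
    B = {1, 3} ∨ B = {0, 2} ∨ B = {0, 3} := by
  revert B
  unfold IsIndep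
  decide

theorem noIsolated_attachPath (hH : NoIsolated H) (X Y : Finset V) :
    NoIsolated (attachPath H X Y) :=
  hH.sumWith (by unfold NoIsolated; decide) _

theorem isBipartition_attachPath (h : IsBipartition H X Y) :
    IsBipartition (attachPath H X Y) (X.disjSum {0, 2}) (Y.disjSum {1, 3}) :=
  h.sumWith (by unfold IsBipartition; decide) <| by
    rintro v i (⟨rfl, hv⟩ | ⟨rfl, hv⟩) <;> simp [hv]

theorem IsBipartition.isMaxIndep_attachPath_disjSum_iff (h : IsBipartition H X Y)
    {A : Finset V} {B : Finset (Fin 4)} :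
    IsMaxIndep (attachPath H X Y) (A.disjSum B) ↔
      A = X ∧ B = {0, 2} ∨ A = Y ∧ B = {1, 3} ∨ IsMaxIndep H A ∧ B = {0, 3} := by
  rw [attachPath, isMaxIndep_sumWith_disjSum_iff]
  constructor
  · rintro ⟨⟨hA, hB, hAB⟩, hdomA, hdomB⟩
    have hdomB' : ∀ i ∉ B, i = 1 ∨ i = 2 ∨ ∃ j ∈ B, (pathGraph 4).Adj i j := fun i hi =>
      (hdomB i hi).elim (.inr ∘ .inr) fun ⟨_, _, hC⟩ => (hC.imp And.left And.left).imp_right .inl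
    rcases eq_of_isIndep_pathGraph_four hB hdomB' with rfl | rfl | rfl
    · refine .inr (.inl ⟨h.eq_right_of_forall_exists_adj ?_ fun a ha => ?_, rfl⟩)
      · exact fun a ha haX => hAB a ha 1 (by simp) (.inl ⟨rfl, haX⟩)
      · simpa using hdomA a ha
    · refine .inl ⟨h.symm.eq_right_of_forall_exists_adj ?_ fun a ha => ?_, rfl⟩
      · exact fun a ha haY => hAB a ha 2 (by simp) (.inr ⟨rfl, haY⟩)
      · simpa using hdomA a ha
    · exact .inr (.inr ⟨isMaxIndep_iff_forall_exists_adj.2 ⟨hA, fun a ha => by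
        simpa using hdomA a ha⟩, rfl⟩)
  · rintro (⟨rfl, rfl⟩ | ⟨rfl, rfl⟩ | ⟨hA, rfl⟩)
    · refine ⟨⟨h.isIndep_left, by unfold IsIndep; decide, ?_⟩, fun a ha => ?_, ?_⟩
      · simpa using fun a ha => h.notMem_right ha
      · exact .inr ⟨2, by simp, .inr ⟨rfl, h.mem_right_of_notMem_left ha⟩⟩
      · exact fun b hb => .inl (by revert b; decide)
    · refine ⟨⟨h.symm.isIndep_left, by unfold IsIndep; decide, ?_⟩, fun a ha => ?_, ?_⟩
      · simpa using fun a ha => h.symm.notMem_right ha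
      · exact .inr ⟨1, by simp, .inl ⟨rfl, h.symm.mem_right_of_notMem_left ha⟩⟩
      · exact fun b hb => .inl (by revert b; decide)
    · obtain ⟨hA, hdomA⟩ := isMaxIndep_iff_forall_exists_adj.1 hA
      refine ⟨⟨hA, by unfold IsIndep; decide, by simp⟩, fun a ha => .inl (hdomA a ha), ?_⟩
      exact fun b hb => .inl (by revert b; decide)

theorem IsBipartition.iotaM_attachPath [Fintype V] (h : IsBipartition H X Y) :
    iotaM (attachPath H X Y) = iotaM H + 2 := by
  have hset : {s | IsMaxIndep (attachPath H X Y) s} =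
      insert (X.disjSum {0, 2}) (insert (Y.disjSum {1, 3})
        ((fun A => A.disjSum {0, 3}) '' {A | IsMaxIndep H A})) := by
    ext s
    obtain ⟨A, B, rfl⟩ : ∃ (A : Finset V) (B : Finset (Fin 4)), s = A.disjSum B :=
      ⟨_, _, s.toLeft_disjSum_toRight.symm⟩
    simp [h.isMaxIndep_attachPath_disjSum_iff, disjSum_inj, eq_comm]
  have h₁ : ({0, 2} : Finset (Fin 4)) ≠ {1, 3} := by decide
  have h₂ : ({0, 3} : Finset (Fin 4)) ≠ {0, 2} := by decide
  have h₃ : ({0, 3} : Finset (Fin 4)) ≠ {1, 3} := by decide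
  rw [iotaM_eq_ncard, hset, Set.ncard_insert_of_notMem (by simp [disjSum_inj, h₁, h₂]),
    Set.ncard_insert_of_notMem (by simp [disjSum_inj, h₃]),
    Set.ncard_image_of_injective _ fun _ _ h => (disjSum_inj.1 h).1, iotaM_eq_ncard]

end AttachPath

section AttachCycle

variable {V : Type*} {K : SimpleGraph V} {L R : Finset V}

def attachCycle (K : SimpleGraph V) (L : Finset V) : SimpleGraph (V ⊕ Fin 4) :=
  K.sumWith (cycleGraph 4) fun v i => v ∈ L ∧ (i = 0 ∨ i = 2)

theorem eq_of_isMaxIndep_cycleGraph_four {B : Finset (Fin 4)}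
    (hB : IsMaxIndep (cycleGraph 4) B) : B = {0, 2} ∨ B = {1, 3} := by
  revert B
  simp only [isMaxIndep_iff_forall_exists_adj, IsIndep]
  decide

theorem eq_of_forall_exists_adj_cycleGraph_four {B : Finset (Fin 4)} (h0 : 0 ∉ B) (h2 : 2 ∉ B)
    (hdom : ∀ i ∉ B, i = 0 ∨ i = 2 ∨ ∃ j ∈ B, (cycleGraph 4).Adj i j) : B = {1, 3} := by
  revert B
  decide

theorem noIsolated_attachCycle (hK : NoIsolated K) (L : Finset V) :
    NoIsolated (attachCycle K L) :=
  hK.sumWith (by unfold NoIsolated; decide) _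

theorem isBipartition_attachCycle (h : IsBipartition K L R) :
    IsBipartition (attachCycle K L) (L.disjSum {1, 3}) (R.disjSum {0, 2}) :=
  h.sumWith (by unfold IsBipartition; decide) <| by
    rintro v i ⟨hv, rfl | rfl⟩ <;> simp [hv]

theorem IsBipartition.isMaxIndep_attachCycle_disjSum_iff (h : IsBipartition K L R)
    {A : Finset V} {B : Finset (Fin 4)} :
    IsMaxIndep (attachCycle K L) (A.disjSum B) ↔
      A = R ∧ B = {0, 2} ∨ IsMaxIndep K A ∧ B = {1, 3} := by
  rw [attachCycle, isMaxIndep_sumWith_disjSum_iff]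
  constructor
  · rintro ⟨⟨hA, hB, hAB⟩, hdomA, hdomB⟩
    have hB' : B = {0, 2} ∧ (∀ a ∈ A, a ∉ L) ∨ B = {1, 3} := by
      by_cases hAL : ∃ a ∈ A, a ∈ L
      · obtain ⟨a, ha, haL⟩ := hAL
        refine .inr (eq_of_forall_exists_adj_cycleGraph_four ?_ ?_ fun i hi => ?_)
        · exact fun h0 => hAB a ha 0 h0 ⟨haL, .inl rfl⟩
        · exact fun h2 => hAB a ha 2 h2 ⟨haL, .inr rfl⟩
        · rcases hdomB i hi with hadj | ⟨-, -, -, hi02⟩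
          exacts [.inr (.inr hadj), hi02.imp_right .inl]
      · push Not at hAL
        refine (eq_of_isMaxIndep_cycleGraph_four <| isMaxIndep_iff_forall_exists_adj.2
          ⟨hB, fun i hi => (hdomB i hi).resolve_right ?_⟩).imp (⟨·, hAL⟩) id
        exact fun ⟨a, ha, haL, _⟩ => hAL a ha haL
    rcases hB' with ⟨rfl, hAL⟩ | rfl
    · exact .inl ⟨h.eq_right_of_forall_exists_adj hAL fun a ha => by simpa using hdomA a ha, rfl⟩
    · exact .inr ⟨isMaxIndep_iff_forall_exists_adj.2 ⟨hA, fun a ha => by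
        simpa using hdomA a ha⟩, rfl⟩
  · rintro (⟨rfl, rfl⟩ | ⟨hA, rfl⟩)
    · refine ⟨⟨h.symm.isIndep_left, by unfold IsIndep; decide, ?_⟩, fun a ha => ?_, ?_⟩
      · simpa using fun a ha => h.symm.notMem_right ha
      · exact .inr ⟨0, by simp, h.symm.mem_right_of_notMem_left ha, .inl rfl⟩
      · exact fun i hi => .inl (by revert i; decide)
    · obtain ⟨hA, hdomA⟩ := isMaxIndep_iff_forall_exists_adj.1 hA
      refine ⟨⟨hA, by unfold IsIndep; decide, by simp⟩, fun a ha => .inl (hdomA a ha), ?_⟩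
      exact fun i hi => .inl (by revert i; decide)

theorem IsBipartition.iotaM_attachCycle [Fintype V] (h : IsBipartition K L R) :
    iotaM (attachCycle K L) = iotaM K + 1 := by
  have hset : {s | IsMaxIndep (attachCycle K L) s} =
      insert (R.disjSum {0, 2}) ((fun A => A.disjSum {1, 3}) '' {A | IsMaxIndep K A}) := by
    ext s
    obtain ⟨A, B, rfl⟩ : ∃ (A : Finset V) (B : Finset (Fin 4)), s = A.disjSum B :=
      ⟨_, _, s.toLeft_disjSum_toRight.symm⟩
    simp [h.isMaxIndep_attachCycle_disjSum_iff, disjSum_inj, eq_comm]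
  have h₁ : ({1, 3} : Finset (Fin 4)) ≠ {0, 2} := by decide
  rw [iotaM_eq_ncard, hset, Set.ncard_insert_of_notMem (by simp [disjSum_inj, h₁]),
    Set.ncard_image_of_injective _ fun _ _ h => (disjSum_inj.1 h).1, iotaM_eq_ncard]

end AttachCycle

theorem exists_graph_of_card_eq {V : Type*} [Fintype V] (H : SimpleGraph V)
    (hbip : IsBipartite H) (hiso : NoIsolated H) {n m : ℕ} (hn : Fintype.card V = n)
    (hm : iotaM H = m) :
    ∃ (W : Type) (_ : Fintype W) (G' : SimpleGraph W),
      IsBipartite G' ∧ NoIsolated G' ∧ Fintype.card W = n ∧ iotaM G' = m := by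
  subst hn hm
  exact ⟨Fin (Fintype.card V), inferInstance, H.comap (Fintype.equivFin V).symm,
    hbip.comap _, hiso.comap _, Fintype.card_fin _, iotaM_comap H _⟩

/-- For any two bipartite graphs `G` and `G̃` without isolated vertices there is a
bipartite graph without isolated vertices with `ν(G) + ν(G̃) + 4` vertices and
exactly `ι_m(G) + ι_m(G̃)` maximal independent sets. -/
theorem stmt_13 {α β : Type*} [Fintype α] [Fintype β]
    (G : SimpleGraph α) (Gt : SimpleGraph β)
    (hbipG : IsBipartite G) (hisoG : NoIsolated G)
    (hbipGt : IsBipartite Gt) (hisoGt : NoIsolated Gt) :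
    ∃ (W : Type) (_ : Fintype W) (G' : SimpleGraph W),
      IsBipartite G' ∧ NoIsolated G' ∧
      Fintype.card W = Fintype.card α + Fintype.card β + 4 ∧
      iotaM G' = iotaM G + iotaM Gt := by
  obtain ⟨L₁, R₁, hG⟩ := hbipG
  obtain ⟨L₂, R₂, hGt⟩ := hbipGt
  rcases isEmpty_or_nonempty α with hα | hα
  · refine exists_graph_of_card_eq (attachCycle Gt L₂) ⟨_, _, isBipartition_attachCycle hGt⟩
      (noIsolated_attachCycle hisoGt L₂) (by simp) ?_
    rw [hGt.iotaM_attachCycle, iotaM_of_isEmpty G, add_comm]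
  rcases isEmpty_or_nonempty β with hβ | hβ
  · refine exists_graph_of_card_eq (attachCycle G L₁) ⟨_, _, isBipartition_attachCycle hG⟩
      (noIsolated_attachCycle hisoG L₁) (by simp) ?_
    rw [hG.iotaM_attachCycle, iotaM_of_isEmpty Gt]
  have hJ := isBipartition_bipartiteJoin hG hGt
  refine exists_graph_of_card_eq (attachPath _ _ _) ⟨_, _, isBipartition_attachPath hJ⟩
    (noIsolated_attachPath (hisoG.sumWith hisoGt _) _ _) (by simp) ?_
  rw [hJ.iotaM_attachPath, iotaM_bipartiteJoin_add_two hG hGt hisoG hisoGt]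
end

section
/- Let s ≥ 2 and t ≥ 1 be integers, and let Ĝ be the graph on vertices u_{i,j}, v_{i,j} for 1 ≤ i ≤ s−1, 1 ≤ j ≤ t+1, with edges u_{i,j}v_{i,j} for 1 ≤ j ≤ t, and edges u_{i,j}v_{k,t+1} for all 1 ≤ i ≤ k ≤ s−1 and 1 ≤ j ≤ t+1. Then the number of maximal independent sets of Ĝ equals (2^{st} − 1)/(2^t − 1) = ∑_{k=0}^{s−1} 2^{(s−1−k)t}. -/
lemma aux_isMaxIndep_iff {V : Type*} [DecidableEq V] (G : SimpleGraph V) (I : Finset V) :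
    IsMaxIndep G I ↔ IsIndep G I ∧ ∀ v, v ∉ I → ∃ u ∈ I, G.Adj v u := by
  constructor
  · rintro ⟨hind, hmax⟩
    refine ⟨hind, fun v hv => ?_⟩
    by_contra h
    push_neg at h
    have hind' : IsIndep G (insert v I) := by
      intro a ha b hb
      rcases Finset.mem_insert.mp ha with h1 | h1 <;>
        rcases Finset.mem_insert.mp hb with h2 | h2
      · subst h1; subst h2; simp
      · subst h1; exact fun hadj => h b h2 hadj
      · subst h2; exact fun hadj => h a h1 hadj.symm
      · exact hind a h1 b h2
    have heq := hmax _ hind' (Finset.subset_insert _ _)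
    exact hv (by rw [heq]; exact Finset.mem_insert_self v I)
  · rintro ⟨hind, hmax⟩
    refine ⟨hind, fun J hJ hIJ => Finset.Subset.antisymm hIJ fun v hv => ?_⟩
    by_contra hvI
    obtain ⟨u, huI, hadj⟩ := hmax v hvI
    exact hJ v hv u (hIJ huI) hadj

lemma aux_geom (t : ℕ) (s : ℕ) :
    (2 ^ t - 1) * ∑ m ∈ Finset.range s, 2 ^ (m * t) = 2 ^ (s * t) - 1 := by
  induction s with
  | zero => simp
  | succ n ih =>
    rw [Finset.sum_range_succ, Nat.mul_add, ih]
    have h1 : 1 ≤ 2 ^ (n * t) := Nat.one_le_two_pow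
    have h2 : 1 ≤ 2 ^ t := Nat.one_le_two_pow
    have h3 : (2 ^ t - 1) * 2 ^ (n * t) = 2 ^ (n * t) * 2 ^ t - 2 ^ (n * t) := by
      rw [Nat.sub_mul, one_mul, mul_comm]
    have h4 : 2 ^ (n * t) ≤ 2 ^ (n * t) * 2 ^ t := Nat.le_mul_of_pos_right _ (by positivity)
    have h5 : 2 ^ ((n + 1) * t) = 2 ^ (n * t) * 2 ^ t := by rw [← pow_add, add_mul, one_mul]
    omega

lemma aux_sum_eq (s t : ℕ) :
    ∑ k ∈ Finset.range s, 2 ^ ((s - 1 - k) * t) = ∑ m ∈ Finset.range s, 2 ^ (m * t) :=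
  Finset.sum_range_reflect (fun m => 2 ^ (m * t)) s

lemma aux_div (s t : ℕ) (ht : 1 ≤ t) :
    (2 ^ (s * t) - 1) / (2 ^ t - 1) = ∑ k ∈ Finset.range s, 2 ^ ((s - 1 - k) * t) := by
  rw [aux_sum_eq]
  have h2 : 2 ≤ 2 ^ t := by calc 2 = 2^1 := (pow_one 2).symm
                                 _ ≤ 2^t := Nat.pow_le_pow_right (by norm_num) ht
  rw [← aux_geom t s, Nat.mul_div_cancel_left _ (by omega)]

abbrev VT (s t : ℕ) := (Fin (s - 1) × Fin (t + 1)) ⊕ (Fin (s - 1) × Fin (t + 1))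

def Mpred (s t p : ℕ) (f : ℕ → ℕ → Bool) : VT s t → Prop
  | Sum.inl (i, j) => p ≤ i.val ∧ ((j : ℕ) = t ∨ f i.val j.val = true)
  | Sum.inr (i, j) => i.val < p ∨ ((j : ℕ) < t ∧ f i.val j.val = false)

noncomputable def Mset (s t p : ℕ) (f : ℕ → ℕ → Bool) : Finset (VT s t) :=
  @Finset.filter _ (Mpred s t p f) (Classical.decPred _) Finset.univ

lemma mem_Mset {s t p : ℕ} {f : ℕ → ℕ → Bool} {x : VT s t} :
    x ∈ Mset s t p f ↔ Mpred s t p f x := by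
  simp [Mset, Finset.mem_filter]

section

variable (s t : ℕ) (Ghat : SimpleGraph (VT s t))
  (hGhat : ∀ x y, Ghat.Adj x y ↔
      (∃ (i k : Fin (s - 1)) (j l : Fin (t + 1)),
        ((x = Sum.inl (i, j) ∧ y = Sum.inr (k, l)) ∨
         (x = Sum.inr (k, l) ∧ y = Sum.inl (i, j))) ∧
        ((i = k ∧ j = l ∧ (j : ℕ) < t) ∨ ((l : ℕ) = t ∧ i ≤ k))))

include hGhat

lemma adj_lr (i k : Fin (s - 1)) (j l : Fin (t + 1)) :
    Ghat.Adj (Sum.inl (i, j)) (Sum.inr (k, l)) ↔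
      ((i = k ∧ j = l ∧ (j : ℕ) < t) ∨ ((l : ℕ) = t ∧ i ≤ k)) := by
  rw [hGhat]
  constructor
  · rintro ⟨i', k', j', l', (⟨h1, h2⟩ | ⟨h1, h2⟩), hc⟩
    · simp only [Sum.inl.injEq, Sum.inr.injEq, Prod.mk.injEq] at h1 h2
      obtain ⟨rfl, rfl⟩ := h1; obtain ⟨rfl, rfl⟩ := h2; exact hc
    · simp at h1
  · intro h; exact ⟨i, k, j, l, Or.inl ⟨rfl, rfl⟩, h⟩

lemma adj_rl (i k : Fin (s - 1)) (j l : Fin (t + 1)) :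
    Ghat.Adj (Sum.inr (k, l)) (Sum.inl (i, j)) ↔
      ((i = k ∧ j = l ∧ (j : ℕ) < t) ∨ ((l : ℕ) = t ∧ i ≤ k)) := by
  rw [Ghat.adj_comm, adj_lr s t Ghat hGhat]

lemma adj_ll (a b : Fin (s - 1) × Fin (t + 1)) :
    ¬ Ghat.Adj (Sum.inl a) (Sum.inl b) := by
  rw [hGhat]
  rintro ⟨i', k', j', l', (⟨h1, h2⟩ | ⟨h1, h2⟩), hc⟩ <;> simp at h1 h2

lemma adj_rr (a b : Fin (s - 1) × Fin (t + 1)) :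
    ¬ Ghat.Adj (Sum.inr a) (Sum.inr b) := by
  rw [hGhat]
  rintro ⟨i', k', j', l', (⟨h1, h2⟩ | ⟨h1, h2⟩), hc⟩ <;> simp at h1 h2

lemma Mset_isMaxIndep (p : ℕ) (f : ℕ → ℕ → Bool) :
    IsMaxIndep Ghat (Mset s t p f) := by
  rw [aux_isMaxIndep_iff]
  constructor
  · rintro (⟨i, j⟩ | ⟨i, j⟩) hx (⟨k, l⟩ | ⟨k, l⟩) hy hadj
    · exact adj_ll s t Ghat hGhat _ _ hadj
    · rw [adj_lr s t Ghat hGhat] at hadj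
      rw [mem_Mset] at hx hy
      simp only [Mpred] at hx hy
      rcases hadj with ⟨rfl, rfl, hjt⟩ | ⟨hlt, hik⟩
      · rcases hy with hy | ⟨_, hy⟩
        · omega
        · rcases hx.2 with h | h
          · omega
          · rw [h] at hy; exact absurd hy (by simp)
      · rcases hy with hy | ⟨hy, _⟩
        · have := hx.1; have h2 : i.val ≤ k.val := hik; omega
        · omega
    · rw [adj_rl s t Ghat hGhat] at hadj
      rw [mem_Mset] at hx hy
      simp only [Mpred] at hx hy
      rcases hadj with ⟨rfl, rfl, hjt⟩ | ⟨hlt, hik⟩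
      · rcases hx with hx | ⟨_, hx⟩
        · omega
        · rcases hy.2 with h | h
          · omega
          · rw [h] at hx; exact absurd hx (by simp)
      · rcases hx with hx | ⟨hx, _⟩
        · have := hy.1; have h2 : k.val ≤ i.val := hik; omega
        · omega
    · exact adj_rr s t Ghat hGhat _ _ hadj
  · rintro (⟨i, j⟩ | ⟨i, j⟩) hv
    · rw [mem_Mset] at hv
      simp only [Mpred, not_and, not_or] at hv
      by_cases hpi : p ≤ i.val
      · obtain ⟨hjt, hf⟩ := hv hpi
        have hjlt : (j : ℕ) < t := by have := j.isLt; omega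
        refine ⟨Sum.inr (i, j), ?_, ?_⟩
        · rw [mem_Mset]; exact Or.inr ⟨hjlt, by simpa using hf⟩
        · rw [adj_lr s t Ghat hGhat]; exact Or.inl ⟨rfl, rfl, hjlt⟩
      · refine ⟨Sum.inr (i, Fin.last t), ?_, ?_⟩
        · rw [mem_Mset]; exact Or.inl (by omega)
        · rw [adj_lr s t Ghat hGhat]; exact Or.inr ⟨by simp, le_refl i⟩
    · rw [mem_Mset] at hv
      simp only [Mpred, not_or, not_and] at hv
      obtain ⟨hip, hv2⟩ := hv
      by_cases hjt : (j : ℕ) < t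
      · have hf := hv2 hjt
        refine ⟨Sum.inl (i, j), ?_, ?_⟩
        · rw [mem_Mset]
          exact ⟨by omega, Or.inr (by simpa using hf)⟩
        · rw [adj_rl s t Ghat hGhat]; exact Or.inl ⟨rfl, rfl, hjt⟩
      · have hjeq : (j : ℕ) = t := by have := j.isLt; omega
        refine ⟨Sum.inl (i, j), ?_, ?_⟩
        · rw [mem_Mset]; exact ⟨by omega, Or.inl hjeq⟩
        · rw [adj_rl s t Ghat hGhat]; exact Or.inr ⟨hjeq, le_refl i⟩

lemma exists_Mset_eq (I : Finset (VT s t)) (hI : IsMaxIndep Ghat I) :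
    ∃ p ≤ s - 1, ∃ f : ℕ → ℕ → Bool, I = Mset s t p f := by
  classical
  rw [aux_isMaxIndep_iff] at hI
  obtain ⟨hind, hmaxv⟩ := hI
  have hPn : (s - 1) ∈ {i : ℕ | ∀ h : i < s - 1,
      Sum.inr ((⟨i, h⟩ : Fin (s - 1)), Fin.last t) ∉ I} := by
    intro h; exact absurd h (lt_irrefl _)
  set p := sInf {i : ℕ | ∀ h : i < s - 1,
      Sum.inr ((⟨i, h⟩ : Fin (s - 1)), Fin.last t) ∉ I} with hpdef
  have hple : p ≤ s - 1 := Nat.sInf_le hPn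
  have hp0 : ∀ h : p < s - 1, Sum.inr ((⟨p, h⟩ : Fin (s - 1)), Fin.last t) ∉ I :=
    Nat.sInf_mem ⟨s - 1, hPn⟩
  have hfull0 : ∀ (i : Fin (s - 1)), i.val < p → Sum.inr (i, Fin.last t) ∈ I := by
    intro i hip
    have h := Nat.notMem_of_lt_sInf (s := {i : ℕ | ∀ h : i < s - 1,
      Sum.inr ((⟨i, h⟩ : Fin (s - 1)), Fin.last t) ∉ I}) (by rw [← hpdef]; exact hip)
    simp only [Set.mem_setOf_eq, not_forall, not_not] at h
    obtain ⟨h', hmem⟩ := h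
    exact hmem
  have hL1 : ∀ (k : Fin (s - 1)), Sum.inr (k, Fin.last t) ∈ I →
      ∀ (i : Fin (s - 1)), i ≤ k → ∀ j, Sum.inr (i, j) ∈ I := by
    intro k hk i hik j
    by_contra h
    obtain ⟨u, huI, hadj⟩ := hmaxv _ h
    rcases u with ⟨l, j'⟩ | ⟨l, j'⟩
    · rw [adj_rl s t Ghat hGhat] at hadj
      have hli : l ≤ i := by
        rcases hadj with ⟨rfl, _, _⟩ | ⟨_, hli⟩
        · exact le_refl _
        · exact hli
      refine hind _ huI _ hk ?_
      rw [adj_lr s t Ghat hGhat]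
      exact Or.inr ⟨by simp, le_trans hli hik⟩
    · exact adj_rr s t Ghat hGhat _ _ hadj
  have hL2a : ∀ (i : Fin (s - 1)), i.val < p → ∀ j, Sum.inr (i, j) ∈ I :=
    fun i hip j => hL1 i (hfull0 i hip) i (le_refl i) j
  have hL2b : ∀ (i : Fin (s - 1)), p ≤ i.val → Sum.inr (i, Fin.last t) ∉ I := by
    intro i hpi hmem
    have hplt : p < s - 1 := lt_of_le_of_lt hpi i.isLt
    exact hp0 hplt (hL1 i hmem ⟨p, hplt⟩ (by simpa [Fin.le_def] using hpi) (Fin.last t))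
  have hL3 : ∀ (i : Fin (s - 1)) (j : Fin (t + 1)), i.val < p → Sum.inl (i, j) ∉ I := by
    intro i j hip hmem
    refine hind _ hmem _ (hL2a i hip (Fin.last t)) ?_
    rw [adj_lr s t Ghat hGhat]
    exact Or.inr ⟨by simp, le_refl i⟩
  have hL4 : ∀ (i : Fin (s - 1)), p ≤ i.val → Sum.inl (i, Fin.last t) ∈ I := by
    intro i hpi
    by_contra h
    obtain ⟨u, huI, hadj⟩ := hmaxv _ h
    rcases u with ⟨l, j'⟩ | ⟨k, l⟩
    · exact adj_ll s t Ghat hGhat _ _ hadj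
    · rw [adj_lr s t Ghat hGhat] at hadj
      rcases hadj with ⟨rfl, rfl, hjt⟩ | ⟨hlt, hik⟩
      · simp at hjt
      · have hl : l = Fin.last t := Fin.ext (by simpa using hlt)
        rw [hl] at huI
        exact hL2b k (le_trans hpi hik) huI
  have hL5 : ∀ (i : Fin (s - 1)) (j : Fin (t + 1)), p ≤ i.val → (j : ℕ) < t →
      (Sum.inl (i, j) ∈ I ↔ Sum.inr (i, j) ∉ I) := by
    intro i j hpi hjt
    constructor
    · intro h1 h2
      refine hind _ h1 _ h2 ?_
      rw [adj_lr s t Ghat hGhat]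
      exact Or.inl ⟨rfl, rfl, hjt⟩
    · intro h2
      by_contra h1
      obtain ⟨u, huI, hadj⟩ := hmaxv _ h1
      rcases u with ⟨l, j'⟩ | ⟨k, l⟩
      · exact adj_ll s t Ghat hGhat _ _ hadj
      · rw [adj_lr s t Ghat hGhat] at hadj
        rcases hadj with ⟨rfl, rfl, _⟩ | ⟨hlt, hik⟩
        · exact h2 huI
        · have hl : l = Fin.last t := Fin.ext (by simpa using hlt)
          rw [hl] at huI
          exact hL2b k (le_trans hpi hik) huI
  refine ⟨p, hple, fun a b => if h : a < s - 1 ∧ b < t + 1 then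
      decide (Sum.inl ((⟨a, h.1⟩ : Fin (s - 1)), (⟨b, h.2⟩ : Fin (t + 1))) ∈ I)
    else false, ?_⟩
  ext x
  rw [mem_Mset]
  rcases x with ⟨i, j⟩ | ⟨i, j⟩
  · simp only [Mpred]
    rw [dif_pos (⟨i.isLt, j.isLt⟩ : i.val < s - 1 ∧ j.val < t + 1)]
    constructor
    · intro hmem
      have hpi : p ≤ i.val := by
        by_contra h
        exact hL3 i j (by omega) hmem
      refine ⟨hpi, ?_⟩
      by_cases hjt : (j : ℕ) = t
      · exact Or.inl hjt
      · right
        rw [decide_eq_true_eq]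
        exact hmem
    · rintro ⟨hpi, hjt | hf⟩
      · have hj : j = Fin.last t := Fin.ext (by simpa using hjt)
        rw [hj]
        exact hL4 i hpi
      · rw [decide_eq_true_eq] at hf
        exact hf
  · simp only [Mpred]
    rw [dif_pos (⟨i.isLt, j.isLt⟩ : i.val < s - 1 ∧ j.val < t + 1)]
    constructor
    · intro hmem
      by_cases hip : i.val < p
      · exact Or.inl hip
      · right
        have hpi : p ≤ i.val := by omega
        have hjt : (j : ℕ) < t := by
          by_contra h
          have hj : j = Fin.last t := Fin.ext (by have := j.isLt; simp; omega)
          rw [hj] at hmem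
          exact hL2b i hpi hmem
        refine ⟨hjt, ?_⟩
        rw [decide_eq_false_iff_not]
        exact fun h => (hL5 i j hpi hjt).mp h hmem
    · rintro (hip | ⟨hjt, hf⟩)
      · exact hL2a i hip j
      · by_cases hip : i.val < p
        · exact hL2a i hip j
        · rw [decide_eq_false_iff_not] at hf
          by_contra h2
          exact hf ((hL5 i j (by omega) hjt).mpr h2)

end

lemma Mset_congr {s t p : ℕ} {f1 f2 : ℕ → ℕ → Bool}
    (h : ∀ a b, p ≤ a → a < s - 1 → b < t → f1 a b = f2 a b) :
    Mset s t p f1 = Mset s t p f2 := by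
  ext x
  rw [mem_Mset, mem_Mset]
  rcases x with ⟨i, j⟩ | ⟨i, j⟩
  · simp only [Mpred]
    by_cases hpi : p ≤ i.val
    · by_cases hjt : (j : ℕ) = t
      · simp [hjt]
      · rw [h i.val j.val hpi i.isLt (by have := j.isLt; omega)]
    · simp [hpi]
  · simp only [Mpred]
    by_cases hip : i.val < p
    · simp [hip]
    · by_cases hjt : (j : ℕ) < t
      · rw [h i.val j.val (by omega) i.isLt hjt]
      · simp [hip, hjt]

noncomputable def decode (s t : ℕ) (a : Σ p : Fin s, (Fin (s - 1 - p.val) × Fin t → Bool)) :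
    Finset (VT s t) :=
  Mset s t a.1.val (fun x y => if h : a.1.val ≤ x ∧ x < s - 1 ∧ y < t then
    a.2 (⟨x - a.1.val, by omega⟩, ⟨y, h.2.2⟩) else false)

lemma decode_mem_last (s t : ℕ) (p : Fin s) (g : Fin (s - 1 - p.val) × Fin t → Bool)
    (i : Fin (s - 1)) :
    Sum.inr (i, Fin.last t) ∈ decode s t ⟨p, g⟩ ↔ i.val < p.val := by
  rw [decode, mem_Mset]
  simp [Mpred]

lemma decode_mem_inl (s t : ℕ) (p : Fin s) (g : Fin (s - 1 - p.val) × Fin t → Bool)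
    (a : Fin (s - 1 - p.val)) (b : Fin t) (ha : p.val + a.val < s - 1)
    (hb : b.val < t + 1) :
    Sum.inl ((⟨p.val + a.val, ha⟩ : Fin (s - 1)), (⟨b.val, hb⟩ : Fin (t + 1)))
      ∈ decode s t ⟨p, g⟩ ↔ g (a, b) = true := by
  rw [decode, mem_Mset]
  simp only [Mpred]
  have hc : p.val ≤ p.val + a.val ∧ p.val + a.val < s - 1 ∧ b.val < t :=
    ⟨Nat.le_add_right _ _, ha, b.isLt⟩
  rw [dif_pos hc]
  have hal : a.val < s - 1 - p.val := a.isLt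
  have h1 : (⟨p.val + a.val - p.val, by omega⟩ : Fin (s - 1 - p.val)) = a :=
    Fin.ext (by show p.val + a.val - p.val = a.val; omega)
  have h2 : (⟨b.val, b.isLt⟩ : Fin t) = b := Fin.ext rfl
  rw [h1, h2]
  have hbt : ¬ ((⟨b.val, hb⟩ : Fin (t + 1)) : ℕ) = t := by
    have := b.isLt
    show ¬ b.val = t
    omega
  simp [hbt]

lemma decode_inj (s t : ℕ) :
    Function.Injective (decode s t) := by
  rintro ⟨p, g⟩ ⟨q, g'⟩ heq
  have hpq : p = q := by
    by_contra hne
    have hv : p.val ≠ q.val := fun h => hne (Fin.ext h)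
    rcases Nat.lt_or_ge p.val q.val with h | h
    · have hi : p.val < s - 1 := by have := q.isLt; omega
      have m1 := decode_mem_last s t p g ⟨p.val, hi⟩
      have m2 := decode_mem_last s t q g' ⟨p.val, hi⟩
      rw [heq] at m1
      exact Nat.lt_irrefl p.val (m1.mp (m2.mpr h))
    · have hq : q.val < p.val := by omega
      have hi : q.val < s - 1 := by have := p.isLt; omega
      have m1 := decode_mem_last s t p g ⟨q.val, hi⟩
      have m2 := decode_mem_last s t q g' ⟨q.val, hi⟩
      rw [heq] at m1
      exact Nat.lt_irrefl q.val (m2.mp (m1.mpr hq))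
  obtain rfl := hpq
  have hg : g = g' := by
    funext x
    obtain ⟨a, b⟩ := x
    have ha : p.val + a.val < s - 1 := by have := a.isLt; omega
    have m1 := decode_mem_inl s t p g a b ha (by have := b.isLt; omega)
    have m2 := decode_mem_inl s t p g' a b ha (by have := b.isLt; omega)
    rw [heq] at m1
    rw [m2] at m1
    exact Bool.eq_iff_iff.mpr m1.symm
  rw [hg]

lemma decode_isMaxIndep (s t : ℕ) (Ghat : SimpleGraph (VT s t))
    (hGhat : ∀ x y, Ghat.Adj x y ↔
      (∃ (i k : Fin (s - 1)) (j l : Fin (t + 1)),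
        ((x = Sum.inl (i, j) ∧ y = Sum.inr (k, l)) ∨
         (x = Sum.inr (k, l) ∧ y = Sum.inl (i, j))) ∧
        ((i = k ∧ j = l ∧ (j : ℕ) < t) ∨ ((l : ℕ) = t ∧ i ≤ k))))
    (a : Σ p : Fin s, (Fin (s - 1 - p.val) × Fin t → Bool)) :
    IsMaxIndep Ghat (decode s t a) :=
  Mset_isMaxIndep s t Ghat hGhat _ _

/-- Let `s ≥ 2`, `t ≥ 1`, and let `Ĝ` be the bipartite graph with parts
`u_{i,j}` (encoded `Sum.inl (i, j)`) and `v_{i,j}` (encoded `Sum.inr (i, j)`)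
for `i < s - 1`, `j < t + 1` (0-indexed), whose edges are `u_{i,j}v_{i,j}` for
`j < t` and `u_{i,j}v_{k,t}` for all `i ≤ k` and all `j`.  Then the number of
maximal independent sets of `Ĝ` equals
`(2^{st} − 1)/(2^t − 1) = ∑_{k=0}^{s−1} 2^{(s−1−k)t}`. -/
theorem stmt_14 (s t : ℕ) (hs : 2 ≤ s) (ht : 1 ≤ t)
    (Ghat : SimpleGraph ((Fin (s - 1) × Fin (t + 1)) ⊕ (Fin (s - 1) × Fin (t + 1))))
    (hGhat : ∀ x y, Ghat.Adj x y ↔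
      (∃ (i k : Fin (s - 1)) (j l : Fin (t + 1)),
        ((x = Sum.inl (i, j) ∧ y = Sum.inr (k, l)) ∨
         (x = Sum.inr (k, l) ∧ y = Sum.inl (i, j))) ∧
        ((i = k ∧ j = l ∧ (j : ℕ) < t) ∨ ((l : ℕ) = t ∧ i ≤ k)))) :
    iotaM Ghat = (2 ^ (s * t) - 1) / (2 ^ t - 1) ∧
      (2 ^ (s * t) - 1) / (2 ^ t - 1) = ∑ k ∈ Finset.range s, 2 ^ ((s - 1 - k) * t) := by
  have hdiv := aux_div s t ht
  refine ⟨?_, hdiv⟩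
  rw [hdiv]
  have hbij : Function.Bijective
      (fun a : (Σ p : Fin s, (Fin (s - 1 - p.val) × Fin t → Bool)) =>
        (⟨decode s t a, decode_isMaxIndep s t Ghat hGhat a⟩ :
          {I : Finset (VT s t) // IsMaxIndep Ghat I})) := by
    constructor
    · intro a a' h
      exact decode_inj s t (congrArg Subtype.val h)
    · rintro ⟨I, hI⟩
      obtain ⟨p, hple, f, hIf⟩ := exists_Mset_eq s t Ghat hGhat I hI
      refine ⟨⟨⟨p, by omega⟩, fun x => f (p + x.1.val) x.2.val⟩, ?_⟩
      apply Subtype.ext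
      show decode s t _ = I
      rw [hIf, decode]
      apply Mset_congr
      intro a b hpa has hbt
      rw [dif_pos ⟨hpa, has, hbt⟩]
      show f (p + (a - p)) b = f a b
      rw [Nat.add_sub_cancel' hpa]
  have hcard : Nat.card {I : Finset (VT s t) // IsMaxIndep Ghat I} =
      Nat.card (Σ p : Fin s, (Fin (s - 1 - p.val) × Fin t → Bool)) :=
    (Nat.card_eq_of_bijective _ hbij).symm
  show Nat.card {I : Finset (VT s t) // IsMaxIndep Ghat I} = _
  rw [hcard, Nat.card_eq_fintype_card, Fintype.card_sigma]
  rw [← Fin.sum_univ_eq_sum_range (fun k => 2 ^ ((s - 1 - k) * t)) s]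
  apply Finset.sum_congr rfl
  intro p _
  simp [Fintype.card_fun, Fintype.card_prod]
end
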